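/- Let τ and τ' be two reduced rooted ordered (planar) trees, each with leaf set {1,…,d} in left-to-right order. If for every 3-element subset A ⊆ {1,…,d} the contractions τ|A and τ'|A are equal, then τ = τ'. -/

import Mathlib

/-- Rooted ordered ("planar") trees: a tree is either a leaf or an internal node carrying an
ordered list of subtrees. -/
inductive PTree : Type where
  | leaf : PTree
  | node : List PTree → PTree

mutual
/-- The number of leaves of a planar tree. -/
def PTree.numLeaves : PTree → ℕ
  | .leaf => 1
  | .node ts => PTree.numLeavesList ts
/-- Total number of leaves of a list of planar trees. -/
def PTree.numLeavesList : List PTree → ℕ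
  | [] => 0
  | t :: rest => t.numLeaves + PTree.numLeavesList rest
end

/-- A planar tree is reduced if every internal node has arity at least `2`. -/
inductive PTree.Reduced : PTree → Prop
  | leaf : PTree.Reduced .leaf
  | node (ts : List PTree) : 2 ≤ ts.length → (∀ t ∈ ts, PTree.Reduced t) →
      PTree.Reduced (.node ts)

mutual
/-- `PTree.contract A t o`: the contraction of `t` onto the set of its leaves whose indices
(in left-to-right order, the leftmost leaf of `t` having index `o`) lie in `A`: take the
subtree spanned by the root and these leaves, suppressing all intermediate nodes of arity `1`;
`none` if no leaf of `t` is selected. -/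
def PTree.contract (A : Finset ℕ) : PTree → ℕ → Option PTree
  | .leaf, o => if o ∈ A then some .leaf else none
  | .node ts, o =>
      match PTree.contractList A ts o with
      | [] => none
      | [t] => some t
      | l => some (.node l)
/-- Contractions of the trees of a list, with leaves numbered consecutively from `o`. -/
def PTree.contractList (A : Finset ℕ) : List PTree → ℕ → List PTree
  | [], _ => []
  | t :: rest, o =>
      match PTree.contract A t o with
      | none => PTree.contractList A rest (o + t.numLeaves)
      | some t' => t' :: PTree.contractList A rest (o + t.numLeaves)
end

/-! Induction on the number of leaves. A subtree containing exactly one (two) of the selected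
leaves contracts to a leaf (a cherry). Let `n` be the size of the first subtree of `τ`: if the
first subtree of `τ'` were larger, the triple `{first leaf, leaf n, last leaf}` would contract to
`((∘,∘),∘)` in `τ'` but not in `τ`. So the first subtrees have the same leaves, and triples inside
them contract as in the whole trees, hence they coincide by induction. Deleting them, the rest is
compared by induction as well, unless one root has arity `2` and the other a larger arity; then
the same triple contracts to `(∘,(∘,∘))` and to `(∘,∘,∘)` respectively. -/

namespace PTree

@[simp] lemma numLeaves_leaf : PTree.leaf.numLeaves = 1 := by rw [numLeaves]

@[simp] lemma numLeaves_node (ts : List PTree) : (node ts).numLeaves = numLeavesList ts := by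
  rw [numLeaves]

@[simp] lemma numLeavesList_nil : numLeavesList [] = 0 := by rw [numLeavesList]

@[simp] lemma numLeavesList_cons (t : PTree) (ts : List PTree) :
    numLeavesList (t :: ts) = t.numLeaves + numLeavesList ts := by
  rw [numLeavesList]

lemma length_le_numLeavesList {ts : List PTree} (h : ∀ t ∈ ts, 1 ≤ t.numLeaves) :
    ts.length ≤ numLeavesList ts := by
  induction ts with
  | nil => simp
  | cons t ts ih =>
    have := h t (by simp)
    have := ih (fun u hu => h u (by simp [hu]))
    simp only [List.length_cons, numLeavesList_cons]
    omega

lemma Reduced.one_le_numLeaves {t : PTree} (h : t.Reduced) : 1 ≤ t.numLeaves := by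
  induction h with
  | leaf => simp
  | node ts hlen _ ih =>
    have := length_le_numLeavesList ih
    simp only [numLeaves_node]
    omega

lemma Reduced.two_le_numLeaves_node {ts : List PTree} (h : (PTree.node ts).Reduced) :
    2 ≤ (PTree.node ts).numLeaves := by
  obtain _ | ⟨_, hlen, hall⟩ := h
  obtain _ | ⟨t₁, _ | ⟨t₂, ts⟩⟩ := ts
  all_goals simp only [List.length_cons, List.length_nil] at hlen
  · omega
  · omega
  have := (hall t₁ (by simp)).one_le_numLeaves
  have := (hall t₂ (by simp)).one_le_numLeaves
  simp only [numLeaves_node, numLeavesList_cons]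
  omega

lemma Reduced.of_mem_node {ts : List PTree} {t : PTree} (h : (PTree.node ts).Reduced)
    (ht : t ∈ ts) : t.Reduced := by
  cases h with
  | node _ _ hall => exact hall t ht

lemma Reduced.node_of_node_cons {t : PTree} {ts : List PTree}
    (h : (PTree.node (t :: ts)).Reduced) (hts : 2 ≤ ts.length) : (PTree.node ts).Reduced :=
  .node ts hts fun _ hu => h.of_mem_node (List.mem_cons_of_mem t hu)

lemma Reduced.exists_eq_cons_cons {ts : List PTree} (h : (PTree.node ts).Reduced) :
    ∃ t₁ t₂ ts₀, ts = t₁ :: t₂ :: ts₀ := by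
  obtain _ | ⟨_, hlen, -⟩ := h
  rcases ts with _ | ⟨t₁, _ | ⟨t₂, ts₀⟩⟩
  all_goals simp only [List.length_cons, List.length_nil] at hlen
  · omega
  · omega
  · exact ⟨t₁, t₂, ts₀, rfl⟩

lemma Reduced.one_le_numLeaves_of_mem {ts : List PTree} {t : PTree}
    (h : (PTree.node ts).Reduced) (ht : t ∈ ts) : 1 ≤ t.numLeaves :=
  (h.of_mem_node ht).one_le_numLeaves

def windowCard (A : Finset ℕ) (o n : ℕ) : ℕ := (A ∩ Finset.Ico o (o + n)).card

lemma windowCard_zero (A : Finset ℕ) (o : ℕ) : windowCard A o 0 = 0 := by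
  simp [windowCard]

lemma windowCard_one (A : Finset ℕ) (o : ℕ) : windowCard A o 1 = if o ∈ A then 1 else 0 := by
  rw [windowCard, Nat.Ico_succ_singleton]
  split_ifs with ho <;> simp [ho]

lemma windowCard_add (A : Finset ℕ) (o n m : ℕ) :
    windowCard A o (n + m) = windowCard A o n + windowCard A (o + n) m := by
  rw [windowCard, windowCard, windowCard, ← Nat.add_assoc,
    ← Finset.Ico_union_Ico_eq_Ico (Nat.le_add_right o n) (Nat.le_add_right _ m),
    Finset.inter_union_distrib_left, Finset.card_union_of_disjoint]
  exact (Finset.Ico_disjoint_Ico_consecutive _ _ _).mono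
    Finset.inter_subset_right Finset.inter_subset_right

lemma windowCard_le (A : Finset ℕ) (o n : ℕ) : windowCard A o n ≤ n := by
  simpa [windowCard] using
    Finset.card_le_card (Finset.inter_subset_right (s₁ := A) (s₂ := Finset.Ico o (o + n)))

lemma windowCard_eq_zero {A : Finset ℕ} {o n : ℕ} (h : ∀ x ∈ A, x < o ∨ o + n ≤ x) :
    windowCard A o n = 0 := by
  rw [windowCard, Finset.card_eq_zero, Finset.eq_empty_iff_forall_notMem]
  intro x hx
  rw [Finset.mem_inter, Finset.mem_Ico] at hx
  have := h x hx.1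
  omega

lemma windowCard_triple {a b c : ℕ} (hab : a < b) (hbc : b < c) (o n : ℕ) :
    windowCard {a, b, c} o n = (if o ≤ a ∧ a < o + n then 1 else 0) +
      (if o ≤ b ∧ b < o + n then 1 else 0) + (if o ≤ c ∧ c < o + n then 1 else 0) := by
  rw [windowCard, ← Finset.filter_mem_eq_inter, Finset.card_filter,
    Finset.sum_insert (by simp; omega), Finset.sum_pair (by omega)]
  simp only [Finset.mem_Ico, add_assoc]

lemma contract_node_eq_none_iff (A : Finset ℕ) (ts : List PTree) (o : ℕ) :
    contract A (node ts) o = none ↔ contractList A ts o = [] := by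
  rw [contract]
  split <;> simp_all

mutual
lemma contract_eq_none_iff (A : Finset ℕ) (t : PTree) (o : ℕ) :
    contract A t o = none ↔ windowCard A o t.numLeaves = 0 := by
  cases t with
  | leaf => rw [contract, numLeaves_leaf, windowCard_one]; split_ifs <;> simp
  | node ts => rw [contract_node_eq_none_iff, contractList_eq_nil_iff, numLeaves_node]

lemma contractList_eq_nil_iff (A : Finset ℕ) (ts : List PTree) (o : ℕ) :
    contractList A ts o = [] ↔ windowCard A o (numLeavesList ts) = 0 := by
  cases ts with
  | nil => simp [contractList, windowCard_zero]
  | cons t ts =>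
    have ht := contract_eq_none_iff A t o
    have hts := contractList_eq_nil_iff A ts (o + t.numLeaves)
    rw [contractList, numLeavesList_cons, windowCard_add]
    rcases hc : contract A t o with _ | u <;> simp_all
end

lemma contractList_eq_nil {A : Finset ℕ} {ts : List PTree} {o : ℕ}
    (h : windowCard A o (numLeavesList ts) = 0) : contractList A ts o = [] :=
  (contractList_eq_nil_iff A ts o).2 h

lemma contract_eq_none {A : Finset ℕ} {t : PTree} {o : ℕ}
    (h : windowCard A o t.numLeaves = 0) : contract A t o = none :=
  (contract_eq_none_iff A t o).2 h

mutual
lemma contract_eq_leaf {A : Finset ℕ} {t : PTree} {o : ℕ}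
    (h : windowCard A o t.numLeaves = 1) : contract A t o = some leaf := by
  cases t with
  | leaf =>
    rw [numLeaves_leaf, windowCard_one] at h
    rw [contract, if_pos (by by_contra ho; simp [ho] at h)]
  | node ts =>
    rw [numLeaves_node] at h
    rw [contract, contractList_eq_leaf h]

lemma contractList_eq_leaf {A : Finset ℕ} {ts : List PTree} {o : ℕ}
    (h : windowCard A o (numLeavesList ts) = 1) : contractList A ts o = [leaf] := by
  cases ts with
  | nil => simp [windowCard_zero] at h
  | cons t ts =>
    rw [numLeavesList_cons, windowCard_add] at h
    rw [contractList]
    obtain h₁ | h₁ : windowCard A o t.numLeaves = 0 ∨ windowCard A o t.numLeaves = 1 := by omega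
    · rw [contract_eq_none h₁, contractList_eq_leaf (by omega)]
    · rw [contract_eq_leaf h₁, contractList_eq_nil (by omega)]
end

mutual
lemma contract_eq_cherry {A : Finset ℕ} {t : PTree} {o : ℕ}
    (h : windowCard A o t.numLeaves = 2) : contract A t o = some (node [leaf, leaf]) := by
  cases t with
  | leaf => have := windowCard_le A o 1; simp_all
  | node ts =>
    rw [numLeaves_node] at h
    rw [contract]
    rcases contractList_eq_cherry_or h with hL | hL <;> rw [hL]

lemma contractList_eq_cherry_or {A : Finset ℕ} {ts : List PTree} {o : ℕ}
    (h : windowCard A o (numLeavesList ts) = 2) :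
    contractList A ts o = [node [leaf, leaf]] ∨ contractList A ts o = [leaf, leaf] := by
  cases ts with
  | nil => simp [windowCard_zero] at h
  | cons t ts =>
    rw [numLeavesList_cons, windowCard_add] at h
    rw [contractList]
    obtain h₁ | h₁ | h₁ : windowCard A o t.numLeaves = 0 ∨ windowCard A o t.numLeaves = 1 ∨
        windowCard A o t.numLeaves = 2 := by omega
    · rw [contract_eq_none h₁]
      exact contractList_eq_cherry_or (by omega)
    · rw [contract_eq_leaf h₁, contractList_eq_leaf (by omega)]
      exact .inr rfl
    · rw [contract_eq_cherry h₁, contractList_eq_nil (by omega)]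
      exact .inl rfl
end

section Shapes

variable {A : Finset ℕ} {t u : PTree} {ts : List PTree} {o : ℕ}

lemma contractList_cons_of_contract_eq_none (h : contract A t o = none) :
    contractList A (t :: ts) o = contractList A ts (o + t.numLeaves) := by
  rw [contractList, h]

lemma contractList_cons_of_contract_eq_some (h : contract A t o = some u) :
    contractList A (t :: ts) o = u :: contractList A ts (o + t.numLeaves) := by
  rw [contractList, h]

lemma contract_node_singleton : contract A (node [t]) o = contract A t o := by
  rcases hc : contract A t o with _ | u
  · rw [contract_node_eq_none_iff, contractList_cons_of_contract_eq_none hc, contractList]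
  · rw [contract, contractList_cons_of_contract_eq_some hc, contractList]

lemma contract_node_of_contractList_eq {v : PTree} {l : List PTree}
    (h : contractList A ts o = u :: v :: l) :
    contract A (node ts) o = some (node (u :: v :: l)) := by
  rw [contract, h]

lemma contract_node_cons_of_windowCard_tail_eq_zero
    (h : windowCard A (o + t.numLeaves) (numLeavesList ts) = 0) :
    contract A (node (t :: ts)) o = contract A t o := by
  rcases hc : contract A t o with _ | u
  · rw [contract_node_eq_none_iff, contractList_cons_of_contract_eq_none hc,
      contractList_eq_nil h]
  · rw [contract, contractList_cons_of_contract_eq_some hc, contractList_eq_nil h]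

lemma contract_node_cons_of_windowCard_head_eq_zero (h : windowCard A o t.numLeaves = 0) :
    contract A (node (t :: ts)) o = contract A (node ts) (o + t.numLeaves) := by
  rw [contract, contract, contractList_cons_of_contract_eq_none (contract_eq_none h)]

end Shapes

def TriplesAgree (o d : ℕ) (τ τ' : PTree) : Prop :=
  ∀ A ⊆ Finset.Ico o (o + d), A.card = 3 → contract A τ o = contract A τ' o

section TriplesAgree

variable {o d n m : ℕ} {τ τ' t t' : PTree} {ts ts' : List PTree}

lemma TriplesAgree.symm (h : TriplesAgree o d τ τ') : TriplesAgree o d τ' τ :=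
  fun A hA hc => (h A hA hc).symm

lemma TriplesAgree.head (h : TriplesAgree o (n + m) (node (t :: ts)) (node (t' :: ts')))
    (ht : t.numLeaves = n) (ht' : t'.numLeaves = n) : TriplesAgree o n t t' := by
  intro A hA hc
  have hout : ∀ k, windowCard A (o + n) k = 0 := fun k => windowCard_eq_zero fun x hx => by
    have := Finset.mem_Ico.1 (hA hx)
    omega
  rw [← contract_node_cons_of_windowCard_tail_eq_zero (t := t) (ts := ts) (ht ▸ hout _),
    ← contract_node_cons_of_windowCard_tail_eq_zero (t := t') (ts := ts') (ht' ▸ hout _)]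
  exact h A (hA.trans (Finset.Ico_subset_Ico_right (by omega))) hc

lemma TriplesAgree.tail (h : TriplesAgree o (n + m) (node (t :: ts)) (node (t' :: ts')))
    (ht : t.numLeaves = n) (ht' : t'.numLeaves = n) :
    TriplesAgree (o + n) m (node ts) (node ts') := by
  intro A hA hc
  have hout : windowCard A o n = 0 := windowCard_eq_zero fun x hx => by
    have := Finset.mem_Ico.1 (hA hx)
    omega
  nth_rw 1 [← ht]
  rw [← ht', ← contract_node_cons_of_windowCard_head_eq_zero (ht ▸ hout),
    ← contract_node_cons_of_windowCard_head_eq_zero (ht' ▸ hout)]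
  exact h A (hA.trans (Finset.Ico_subset_Ico (by omega) (by omega))) hc

end TriplesAgree

section Separation

variable {o d : ℕ} {τ τ' t t' : PTree} {ts ts' : List PTree}

lemma TriplesAgree.contract_triple_eq (h : TriplesAgree o d τ τ') {a b c : ℕ} (hoa : o ≤ a)
    (hab : a < b) (hbc : b < c) (hcd : c < o + d) :
    contract {a, b, c} τ o = contract {a, b, c} τ' o := by
  refine h _ (fun x hx => ?_) (Finset.card_eq_three.2 ⟨a, b, c, by omega, by omega, by omega, rfl⟩)
  simp only [Finset.mem_insert, Finset.mem_singleton] at hx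
  rw [Finset.mem_Ico]
  omega

lemma TriplesAgree.numLeaves_head_le (h : TriplesAgree o d (node (t :: ts)) (node (t' :: ts')))
    (hd : t.numLeaves + numLeavesList ts = d) (hd' : t'.numLeaves + numLeavesList ts' = d)
    (ht : 1 ≤ t.numLeaves) (hts' : 1 ≤ numLeavesList ts') : t'.numLeaves ≤ t.numLeaves := by
  by_contra! hlt
  have key := h.contract_triple_eq (a := o) (b := o + t.numLeaves) (c := o + d - 1)
    le_rfl (by omega) (by omega) (by omega)
  have hc₁ : windowCard {o, o + t.numLeaves, o + d - 1} o t.numLeaves = 1 := by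
    rw [windowCard_triple (by omega) (by omega)]; split_ifs <;> omega
  have hc₂ : windowCard {o, o + t.numLeaves, o + d - 1} (o + t.numLeaves)
      (numLeavesList ts) = 2 := by
    rw [windowCard_triple (by omega) (by omega)]; split_ifs <;> omega
  have hc₁' : windowCard {o, o + t.numLeaves, o + d - 1} o t'.numLeaves = 2 := by
    rw [windowCard_triple (by omega) (by omega)]; split_ifs <;> omega
  have hc₂' : windowCard {o, o + t.numLeaves, o + d - 1} (o + t'.numLeaves)
      (numLeavesList ts') = 1 := by
    rw [windowCard_triple (by omega) (by omega)]; split_ifs <;> omega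
  obtain ⟨x, l, hl⟩ := List.exists_cons_of_ne_nil
    (mt (contractList_eq_nil_iff {o, o + t.numLeaves, o + d - 1} ts (o + t.numLeaves)).1
      (by omega))
  rw [contract_node_of_contractList_eq
      (by rw [contractList_cons_of_contract_eq_some (contract_eq_leaf hc₁), hl]),
    contract_node_of_contractList_eq
      (by rw [contractList_cons_of_contract_eq_some (contract_eq_cherry hc₁'),
        contractList_eq_leaf hc₂'])] at key
  simp at key

lemma not_triplesAgree_node_pair_node_cons_cons {t₁ t₂ t₂' t₃' : PTree}
    (hd : t₁.numLeaves + t₂.numLeaves = d)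
    (hd' : t₁.numLeaves + (t₂'.numLeaves + (t₃'.numLeaves + numLeavesList ts')) = d)
    (ht₁ : 1 ≤ t₁.numLeaves) (ht₂' : 1 ≤ t₂'.numLeaves) (ht₃' : 1 ≤ t₃'.numLeaves) :
    ¬ TriplesAgree o d (node [t₁, t₂]) (node (t₁ :: t₂' :: t₃' :: ts')) := by
  intro h
  have key := h.contract_triple_eq (a := o) (b := o + t₁.numLeaves) (c := o + d - 1)
    le_rfl (by omega) (by omega) (by omega)
  have hc₁ : windowCard {o, o + t₁.numLeaves, o + d - 1} o t₁.numLeaves = 1 := by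
    rw [windowCard_triple (by omega) (by omega)]; split_ifs <;> omega
  have hc₂ : windowCard {o, o + t₁.numLeaves, o + d - 1} (o + t₁.numLeaves) t₂.numLeaves = 2 := by
    rw [windowCard_triple (by omega) (by omega)]; split_ifs <;> omega
  have hc₂' : windowCard {o, o + t₁.numLeaves, o + d - 1} (o + t₁.numLeaves) t₂'.numLeaves = 1 := by
    rw [windowCard_triple (by omega) (by omega)]; split_ifs <;> omega
  have hc₃' : windowCard {o, o + t₁.numLeaves, o + d - 1} (o + t₁.numLeaves + t₂'.numLeaves)
      (numLeavesList (t₃' :: ts')) = 1 := by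
    rw [windowCard_triple (by omega) (by omega), numLeavesList_cons]; split_ifs <;> omega
  rw [contract_node_of_contractList_eq
      (by rw [contractList_cons_of_contract_eq_some (contract_eq_leaf hc₁),
        contractList_cons_of_contract_eq_some (contract_eq_cherry hc₂), contractList]),
    contract_node_of_contractList_eq
      (by rw [contractList_cons_of_contract_eq_some (contract_eq_leaf hc₁),
        contractList_cons_of_contract_eq_some (contract_eq_leaf hc₂'),
        contractList_eq_leaf hc₃'])] at key
  simp at key

end Separation

def DeterminedByTriples (d : ℕ) : Prop :=
  ∀ ⦃τ τ' : PTree⦄, τ.Reduced → τ'.Reduced → τ.numLeaves = d → τ'.numLeaves = d →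
    ∀ ⦃o : ℕ⦄, TriplesAgree o d τ τ' → τ = τ'

section Induction

variable {d o : ℕ} {t₁ t₂ t₁' t₂' : PTree} {ts ts' : List PTree}

lemma tail_eq_of_triplesAgree (ih : ∀ m < d, DeterminedByTriples m)
    (hτ : (node (t₁ :: t₂ :: ts)).Reduced) (hτ' : (node (t₁ :: t₂' :: ts')).Reduced)
    (hd : t₁.numLeaves + (t₂.numLeaves + numLeavesList ts) = d)
    (hd' : t₁.numLeaves + (t₂'.numLeaves + numLeavesList ts') = d)
    (h : TriplesAgree o d (node (t₁ :: t₂ :: ts)) (node (t₁ :: t₂' :: ts'))) :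
    t₂ :: ts = t₂' :: ts' := by
  have := hτ.one_le_numLeaves_of_mem (t := t₁) (by simp)
  have := hτ.one_le_numLeaves_of_mem (t := t₂) (by simp)
  have := hτ'.one_le_numLeaves_of_mem (t := t₂') (by simp)
  subst hd
  have htail := h.tail rfl rfl
  rcases ts with _ | ⟨t₃, ts⟩ <;> rcases ts' with _ | ⟨t₃', ts'⟩
  · simp only [numLeavesList_nil, add_zero] at htail hd'
    have htail₂ : TriplesAgree (o + t₁.numLeaves) t₂.numLeaves t₂ t₂' := fun A hA hc => by
      simpa only [contract_node_singleton] using htail A hA hc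
    rw [ih _ (by omega) (hτ.of_mem_node (by simp)) (hτ'.of_mem_node (by simp)) rfl (by omega)
      htail₂]
  · have := hτ'.one_le_numLeaves_of_mem (t := t₃') (by simp)
    exact absurd h (not_triplesAgree_node_pair_node_cons_cons (by simp)
      (by simp at hd' ⊢; omega) (by omega) (by omega) this)
  · have := hτ.one_le_numLeaves_of_mem (t := t₃) (by simp)
    exact absurd h.symm (not_triplesAgree_node_pair_node_cons_cons
      (by simp at hd' ⊢; omega) (by simp) (by omega) (by omega) this)
  · have := ih _ (by simp; omega) (hτ.node_of_node_cons (by simp))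
      (hτ'.node_of_node_cons (by simp)) (numLeaves_node _) (by simp at hd' ⊢; omega) htail
    exact node.inj this

lemma node_eq_of_triplesAgree (ih : ∀ m < d, DeterminedByTriples m)
    (hτ : (node (t₁ :: t₂ :: ts)).Reduced) (hτ' : (node (t₁' :: t₂' :: ts')).Reduced)
    (hd : (node (t₁ :: t₂ :: ts)).numLeaves = d) (hd' : (node (t₁' :: t₂' :: ts')).numLeaves = d)
    (h : TriplesAgree o d (node (t₁ :: t₂ :: ts)) (node (t₁' :: t₂' :: ts'))) :
    node (t₁ :: t₂ :: ts) = node (t₁' :: t₂' :: ts') := by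
  have := hτ.one_le_numLeaves_of_mem (t := t₁) (by simp)
  have := hτ.one_le_numLeaves_of_mem (t := t₂) (by simp)
  have := hτ'.one_le_numLeaves_of_mem (t := t₁') (by simp)
  have := hτ'.one_le_numLeaves_of_mem (t := t₂') (by simp)
  simp only [numLeaves_node, numLeavesList_cons] at hd hd'
  have hn : t₁'.numLeaves = t₁.numLeaves :=
    le_antisymm (h.numLeaves_head_le (by simp; omega) (by simp; omega) (by omega) (by simp; omega))
      (h.symm.numLeaves_head_le (by simp; omega) (by simp; omega) (by omega) (by simp; omega))
  subst hd
  obtain rfl : t₁ = t₁' := ih _ (by omega) (hτ.of_mem_node (by simp)) (hτ'.of_mem_node (by simp))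
    rfl hn (h.head rfl hn)
  rw [tail_eq_of_triplesAgree ih hτ hτ' rfl (by omega) h]

theorem determinedByTriples (d : ℕ) : DeterminedByTriples d := by
  induction d using Nat.strong_induction_on with
  | _ d ih =>
  intro τ τ' hτ hτ' hd hd' o h
  match τ, τ', hτ, hτ' with
  | leaf, leaf, _, _ => rfl
  | leaf, node _, _, hτ' =>
    have := hτ'.two_le_numLeaves_node
    rw [numLeaves_leaf] at hd
    omega
  | node _, leaf, hτ, _ =>
    have := hτ.two_le_numLeaves_node
    rw [numLeaves_leaf] at hd'
    omega
  | node _, node _, hτ, hτ' =>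
    obtain ⟨t₁, t₂, ts, rfl⟩ := hτ.exists_eq_cons_cons
    obtain ⟨t₁', t₂', ts', rfl⟩ := hτ'.exists_eq_cons_cons
    exact node_eq_of_triplesAgree ih hτ hτ' hd hd' h

end Induction

end PTree

/-- two reduced planar trees with the same number `d` of leaves (numbered
`0,…,d−1` in left-to-right order) coincide as soon as their contractions on every `3`-element
subset of the leaves coincide. -/
theorem reduced_tree_determined_by_triple_contractions (d : ℕ) (τ τ' : PTree)
    (hτ : τ.Reduced) (hτ' : τ'.Reduced)
    (hd : τ.numLeaves = d) (hd' : τ'.numLeaves = d)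
    (h : ∀ A : Finset ℕ, A ⊆ Finset.range d → A.card = 3 →
      PTree.contract A τ 0 = PTree.contract A τ' 0) :
    τ = τ' :=
  PTree.determinedByTriples d hτ hτ' hd hd' fun A hA hc =>
    h A (by rwa [Finset.range_eq_Ico, ← zero_add d]) hc
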